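/- Let K ≥ 1, fix a median index m < K, and let Med : (Fin K → EuclideanSpace ℝ (Fin V)) → EuclideanSpace ℝ (Fin V) be the coordinatewise median, where the median of a K-tuple of reals is the entry at index m of its values sorted in nondecreasing order. Fix w ∈ EuclideanSpace ℝ (Fin V) and define the raw score S(z, s) = ⟪z − Med s, w⟫. Then: (i) for every z, every s : Fin K → EuclideanSpace ℝ (Fin V), and every drift d ∈ EuclideanSpace ℝ (Fin V), S(z + d, fun k ↦ s k + d) = S(z, s); and (ii) consequently, if Z : Ω → EuclideanSpace ℝ (Fin V) and Sₖ : Ω → (Fin K → EuclideanSpace ℝ (Fin V)) are random vectors on a probability space and τ ∈ ℝ is any threshold with ℙ(S(Z, Sₖ) > τ) ≤ α, then sup over all d ∈ EuclideanSpace ℝ (Fin V) of ℙ(S(Z + d, fun k ↦ Sₖ k + d) > τ) ≤ α. -/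

import Mathlib

open MeasureTheory

/-- The median of a `K`-tuple of reals: the entry at index `m` of the list of its
values sorted in nondecreasing order. -/
noncomputable def med (K m : ℕ) (x : Fin K → ℝ) : ℝ :=
  (((List.ofFn x).mergeSort (fun a b => decide (a ≤ b)))).getD m 0

/-- The coordinatewise (dimension-wise) median of `K` vectors in `ℝ^V`. -/
noncomputable def Med (K V m : ℕ)
    (s : Fin K → EuclideanSpace ℝ (Fin V)) : EuclideanSpace ℝ (Fin V) :=
  WithLp.toLp 2 (fun j => med K m (fun k => s k j))

/-- The RSR raw score: subtract the coordinatewise median of the sentinels from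
the query logits and project onto the signature direction `w`. -/
noncomputable def rawScore (K V m : ℕ) (w : EuclideanSpace ℝ (Fin V))
    (z : EuclideanSpace ℝ (Fin V)) (s : Fin K → EuclideanSpace ℝ (Fin V)) : ℝ :=
  inner ℝ (z - Med K V m s) w

private lemma sorted_mergeSort_real (l : List ℝ) :
    List.Pairwise (· ≤ ·) (l.mergeSort (fun a b => decide (a ≤ b))) := by
  have := List.pairwise_mergeSort (le := fun a b : ℝ => decide (a ≤ b))
    (by intro a b c hab hbc; simp_all; linarith)
    (by intro a b; simpa using le_total a b) l
  simpa [List.Pairwise] using this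

private lemma mergeSort_map_add (l : List ℝ) (c : ℝ) :
    ((l.map (· + c)).mergeSort (fun a b => decide (a ≤ b)))
      = (l.mergeSort (fun a b => decide (a ≤ b))).map (· + c) := by
  refine (fun p s1 s2 => List.Perm.eq_of_pairwise' (r := ((· ≤ ·) : ℝ → ℝ → Prop)) s1 s2 p) ?_ ?_ ?_
  · exact (List.mergeSort_perm _ _).trans ((List.mergeSort_perm l _).map _).symm
  · exact sorted_mergeSort_real _
  · exact List.Pairwise.map _ (fun a b h => by simpa using h) (sorted_mergeSort_real l)

private lemma med_add (K m : ℕ) (hm : m < K) (x : Fin K → ℝ) (c : ℝ) :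
    med K m (fun k => x k + c) = med K m x + c := by
  unfold med
  have h1 : (List.ofFn (fun k => x k + c)) = (List.ofFn x).map (· + c) := by
    simp [List.map_ofFn, Function.comp]; rfl
  rw [h1, mergeSort_map_add]
  have hlen : m < ((List.ofFn x).mergeSort (fun a b => decide (a ≤ b))).length := by
    simpa [List.length_mergeSort] using hm
  rw [List.getD_eq_getElem _ _ (by simpa using hlen), List.getD_eq_getElem _ _ hlen]
  simp

/-- Core of Theorem 3 (Robust Type-I Error Control):
(i) the RSR raw score is invariant when the same drift `d` is added to the query
and to all sentinels; (ii) consequently, for any threshold test on this score,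
the false positive rate is uniformly bounded over all drifts `d` by its clean
value `α`. -/
theorem rawScore_drift_invariant_and_type1_control
    (K V : ℕ) (hK : 1 ≤ K) (m : ℕ) (hm : m < K) (w : EuclideanSpace ℝ (Fin V)) :
    (∀ (z : EuclideanSpace ℝ (Fin V)) (s : Fin K → EuclideanSpace ℝ (Fin V))
        (d : EuclideanSpace ℝ (Fin V)),
        rawScore K V m w (z + d) (fun k => s k + d) = rawScore K V m w z s) ∧
    (∀ {Ω : Type} [MeasurableSpace Ω] (P : Measure Ω) [IsProbabilityMeasure P]
        (Z : Ω → EuclideanSpace ℝ (Fin V))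
        (S : Ω → Fin K → EuclideanSpace ℝ (Fin V)) (τ α : ℝ),
        P {ω | rawScore K V m w (Z ω) (S ω) > τ} ≤ ENNReal.ofReal α →
        ⨆ d : EuclideanSpace ℝ (Fin V),
            P {ω | rawScore K V m w (Z ω + d) (fun k => S ω k + d) > τ}
          ≤ ENNReal.ofReal α) := by
  have hMed : ∀ (s : Fin K → EuclideanSpace ℝ (Fin V)) (d : EuclideanSpace ℝ (Fin V)),
      Med K V m (fun k => s k + d) = Med K V m s + d := by
    intro s d
    ext j
    have : Med K V m (fun k => s k + d) j = med K m (fun k => s k j + d j) := rfl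
    rw [this, med_add K m hm]
    rfl
  have hinv : ∀ (z : EuclideanSpace ℝ (Fin V)) (s : Fin K → EuclideanSpace ℝ (Fin V))
      (d : EuclideanSpace ℝ (Fin V)),
      rawScore K V m w (z + d) (fun k => s k + d) = rawScore K V m w z s := by
    intro z s d
    unfold rawScore
    rw [hMed]
    congr 1
    abel
  refine ⟨hinv, ?_⟩
  intro Ω _ P _ Z S τ α h
  refine iSup_le fun d => ?_
  have : {ω | rawScore K V m w (Z ω + d) (fun k => S ω k + d) > τ}
      = {ω | rawScore K V m w (Z ω) (S ω) > τ} := by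
    ext ω; simp [hinv]
  rw [this]; exact h
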